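/- arXiv:2410.15800 — 3 statements merged into one kernel-verified Lean document; each statement's English description precedes it below -/
import Mathlib

section
/- Let G^r = {g_1,…,g_r} be a finite group with identity e, and consider GCNNs whose G-correlation uses kernels from the one-dimensional vector space spanned by the single basis function 𝙺(g) := 1 if g = e and 0 otherwise (so k = 1). Then for every fully connected ReLU network in F(m_0,…,m_L) with parameter vector w (where (h̃_w^{(1)},…,h̃_w^{(m_L)}) denotes the vector of outputs of its last hidden layer), there exists a GCNN h_w ∈ H(1, m_0,…,m_L, r) with the same number of channels in each layer and the same parameter vector w such that for every input function f : G^r → ℝ^{m_0}: ∑_{i=1}^{m_L} ∑_{j=1}^{r} h̃_w^{(i)}(f(g_j)) = h_w(f). -/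
open Finset

noncomputable section

/-- The sign function taking value `1` on positives and `-1` otherwise. -/
def sgn (t : ℝ) : ℝ := if 0 < t then 1 else -1

/-- A class `S` of (±1-valued) real functions shatters some set of `n` distinct points:
all `2^n` sign patterns are realized. -/
def ShattersCard {X : Type*} (S : Set (X → ℝ)) (n : ℕ) : Prop :=
  ∃ x : Fin n → X, Function.Injective x ∧
    ∀ ε : Fin n → Bool, ∃ s ∈ S, ∀ i, s (x i) = (if ε i then 1 else -1)

/-- The class of sign classifiers obtained from a class of real-valued functions. -/
def signClass {X : Type*} (H : Set (X → ℝ)) : Set (X → ℝ) :=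
  {s | ∃ h ∈ H, ∃ b : ℝ, s = fun x => sgn (h x - b)}

/-- ReLU activation. -/
def relu (x : ℝ) : ℝ := max x 0

/-- G-correlation `(K * f)(g) = ∑_{g'} K(g⁻¹ g') f(g')` on a finite group. -/
def gCorr (G : Type*) [Group G] [Fintype G] (K f : G → ℝ) (g : G) : ℝ :=
  ∑ g' : G, K (g⁻¹ * g') * f g'

/-- Kernel parametrized by a weight vector `w` in the basis `K`. -/
def kernelOf {G : Type*} {k : ℕ} (K : Fin k → G → ℝ) (w : Fin k → ℝ) : G → ℝ :=
  fun g => ∑ s, w s * K s g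

/-- The feature maps (units) of a GCNN with basis kernels `K`, weights `w`, biases `b`,
on input `f`. -/
def gcnnUnits (G : Type*) [Group G] [Fintype G] {k : ℕ} (m : ℕ → ℕ)
    (K : Fin k → G → ℝ)
    (w : ∀ t : ℕ, Fin (m (t + 1)) → Fin (m t) → Fin k → ℝ)
    (b : ∀ t : ℕ, Fin (m (t + 1)) → ℝ)
    (f : Fin (m 0) → G → ℝ) : ∀ t : ℕ, Fin (m t) → G → ℝ
  | 0 => f
  | t + 1 => fun j g =>
      relu ((∑ i : Fin (m t),
        gCorr G (kernelOf K (w t j i)) (gcnnUnits G m K w b f t i) g) - b t j)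

/-- Output of a GCNN with `L` layers: global sum pooling of the last feature maps. -/
def gcnnOut (G : Type*) [Group G] [Fintype G] {k : ℕ} (m : ℕ → ℕ)
    (K : Fin k → G → ℝ)
    (w : ∀ t : ℕ, Fin (m (t + 1)) → Fin (m t) → Fin k → ℝ)
    (b : ∀ t : ℕ, Fin (m (t + 1)) → ℝ)
    (L : ℕ) (f : Fin (m 0) → G → ℝ) : ℝ :=
  ∑ i : Fin (m L), ∑ g : G, gcnnUnits G m K w b f L i g

/-- Number of parameters of a GCNN up to layer `ℓ`: `W_ℓ = ∑_{j=1}^ℓ m_j (k m_{j-1} + 1)`. -/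
def gcnnParams (k : ℕ) (m : ℕ → ℕ) (ℓ : ℕ) : ℕ :=
  ∑ j ∈ Finset.range ℓ, m (j + 1) * (k * m j + 1)

/-- Number of parameters of a fully connected network up to layer `ℓ`. -/
def dnnParams (m : ℕ → ℕ) (ℓ : ℕ) : ℕ :=
  ∑ j ∈ Finset.range ℓ, m (j + 1) * (m j + 1)

/-- The GCNN class `H(k, m_0, …, m_L, r)` of fixed architecture with basis kernels `K`. -/
def GCNNClass (G : Type*) [Group G] [Fintype G] (k L : ℕ) (m : ℕ → ℕ)
    (K : Fin k → G → ℝ) : Set ((Fin (m 0) → G → ℝ) → ℝ) :=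
  {h | ∃ w b, h = fun f => gcnnOut G m K w b L f}

/-- The class `H_{W,L,r}` of all GCNNs on `G` with at most `L` layers and at most `W`
parameters, over all `k ≥ 1`, all architectures and all basis kernels; inputs are
embedded in the common domain `G → ℕ → ℝ`, a network of input dimension `m 0` reading
the coordinates `0, …, m 0 - 1`. -/
def GCNNBig (G : Type*) [Group G] [Fintype G] (W L : ℕ) : Set ((G → ℕ → ℝ) → ℝ) :=
  {h | ∃ (k ℓ : ℕ) (m : ℕ → ℕ) (K : Fin k → G → ℝ)
      (w : ∀ t : ℕ, Fin (m (t + 1)) → Fin (m t) → Fin k → ℝ)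
      (b : ∀ t : ℕ, Fin (m (t + 1)) → ℝ),
      0 < k ∧ ℓ ≤ L ∧ gcnnParams k m ℓ ≤ W ∧
      h = fun f => gcnnOut G m K w b ℓ (fun i g => f g (i : ℕ))}

/-- The units of a fully connected ReLU feedforward network. -/
def dnnUnits (m : ℕ → ℕ)
    (w : ∀ t : ℕ, Fin (m (t + 1)) → Fin (m t) → ℝ)
    (b : ∀ t : ℕ, Fin (m (t + 1)) → ℝ)
    (x : Fin (m 0) → ℝ) : ∀ t : ℕ, Fin (m t) → ℝ
  | 0 => x
  | t + 1 => fun j => relu ((∑ i : Fin (m t), w t j i * dnnUnits m w b x t i) - b t j)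

/-- The class `F_{W,L}` of fully connected ReLU networks with at most `L` layers, at most
`W` parameters and a single output unit; inputs are embedded in the common domain `ℕ → ℝ`. -/
def DNNBig (W L : ℕ) : Set ((ℕ → ℝ) → ℝ) :=
  {h | ∃ (ℓ : ℕ) (m : ℕ → ℕ)
      (w : ∀ t : ℕ, Fin (m (t + 1)) → Fin (m t) → ℝ)
      (b : ∀ t : ℕ, Fin (m (t + 1)) → ℝ),
      ℓ ≤ L ∧ dnnParams m ℓ ≤ W ∧ m ℓ = 1 ∧
      h = fun x => ∑ j : Fin (m ℓ), dnnUnits m w b (fun i => x (i : ℕ)) ℓ j}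

lemma gcorr_delta (G : Type) [Group G] [Fintype G] [DecidableEq G]
    (c : ℝ) (f : G → ℝ) (g : G) :
    gCorr G (kernelOf (fun (_ : Fin 1) (g : G) => if g = 1 then (1 : ℝ) else 0)
      (fun _ => c)) f g = c * f g := by
  unfold gCorr kernelOf
  rw [Finset.sum_eq_single g]
  · simp
  · intro g' _ hne
    have : g⁻¹ * g' ≠ 1 := by
      intro h; exact hne ((inv_mul_eq_one.mp h).symm)
    simp [this]
  · simp

lemma gcnn_eq_dnn (G : Type) [Group G] [Fintype G] [DecidableEq G] (m : ℕ → ℕ)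
    (w : ∀ t : ℕ, Fin (m (t + 1)) → Fin (m t) → ℝ)
    (b : ∀ t : ℕ, Fin (m (t + 1)) → ℝ)
    (f : Fin (m 0) → G → ℝ) (t : ℕ) :
    ∀ (i : Fin (m t)) (g : G),
      gcnnUnits G m (fun _ g => if g = 1 then (1 : ℝ) else 0)
        (fun t j i (_ : Fin 1) => w t j i) b f t i g
      = dnnUnits m w b (fun c => f c g) t i := by
  induction t with
  | zero => intro i g; rfl
  | succ t ih =>
    intro j g
    show relu _ = relu _
    congr 1
    congr 1
    apply Finset.sum_congr rfl
    intro i _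
    rw [gcorr_delta, ih i g]

/-- **Lemma 5.1.** With `k = 1` and the basis kernel `𝙺 = 𝟙(· = e)` (indicator of the
identity), every fully connected ReLU network with parameters `(w, b)` has a corresponding
GCNN in `H(1, m_0, …, m_L, r)` with the same channels and the same parameters, such that
summing the outputs of the last hidden layer of the DNN over all inputs `f(g)`, `g ∈ G`,
yields the GCNN output on `f`. -/
theorem dnn_to_gcnn
    (G : Type) [Group G] [Fintype G] [DecidableEq G] (L : ℕ) (m : ℕ → ℕ)
    (w : ∀ t : ℕ, Fin (m (t + 1)) → Fin (m t) → ℝ)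
    (b : ∀ t : ℕ, Fin (m (t + 1)) → ℝ) :
    ∃ h ∈ GCNNClass G 1 L m (fun _ g => if g = 1 then (1 : ℝ) else 0),
      (h = fun f => gcnnOut G (k := 1) m (fun _ g => if g = 1 then (1 : ℝ) else 0)
          (fun t j i (_ : Fin 1) => w t j i) b L f) ∧
      ∀ f : Fin (m 0) → G → ℝ,
        (∑ i : Fin (m L), ∑ g : G, dnnUnits m w b (fun c => f c g) L i) = h f := by
  refine ⟨_, ⟨_, _, rfl⟩, rfl, fun f => ?_⟩
  unfold gcnnOut
  apply Finset.sum_congr rfl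
  intro i _
  apply Finset.sum_congr rfl
  intro g _
  exact (gcnn_eq_dnn G m w b f L i g).symm
end
end

section
/- Let G^r be a finite group of cardinality r ≥ 1 with identity e, and let L > 3 and W ≥ 1 be integers. Then the pseudodimension of the GCNN class H_{6W, L+1, r} (GCNNs with group resolution r, at most L+1 layers and at most 6W parameters) is at least the pseudodimension of the class F_{W,L} of fully connected ReLU networks with at most L layers and at most W parameters: VC(H_{6W, L+1, r}) ≥ VC(F_{W, L}). -/
open Finset

noncomputable section

open scoped Classical

lemma gcnn_units_const (G : Type) [Group G] [Fintype G] (m : ℕ → ℕ)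
    (w : ∀ t : ℕ, Fin (m (t + 1)) → Fin (m t) → ℝ)
    (b : ∀ t : ℕ, Fin (m (t + 1)) → ℝ)
    (x : Fin (m 0) → ℝ) (t : ℕ) (i : Fin (m t)) (g : G) :
    gcnnUnits G m (fun (_ : Fin 1) (g : G) => if g = (1:G) then (1 : ℝ) else 0)
      (fun t j i _ => w t j i) b (fun i _ => x i) t i g = dnnUnits m w b x t i := by
  induction t generalizing g with
  | zero => rfl
  | succ t ih =>
      show relu _ = relu _
      congr 1
      congr 1
      refine Finset.sum_congr rfl fun i' _ => ?_
      unfold gCorr kernelOf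
      have hkey : ∀ g' : G,
          (∑ s : Fin 1, w t i i' * (if g⁻¹ * g' = 1 then (1 : ℝ) else 0)) *
            gcnnUnits G m (fun (_ : Fin 1) (g : G) => if g = (1:G) then (1 : ℝ) else 0)
              (fun t j i _ => w t j i) b (fun i _ => x i) t i' g'
          = if g' = g then w t i i' * dnnUnits m w b x t i' else 0 := by
        intro g'
        rw [ih]
        by_cases h : g' = g
        · simp [h]
        · have : ¬ (g⁻¹ * g' = 1) := fun hc => h (inv_mul_eq_one.mp hc).symm
          simp [this, h]
      calc (∑ g' : G, (∑ s : Fin 1, w t i i' *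
              (if g⁻¹ * g' = 1 then (1:ℝ) else 0)) *
              gcnnUnits G m (fun (_ : Fin 1) (g : G) => if g = (1:G) then (1 : ℝ) else 0)
                (fun t j i _ => w t j i) b (fun i _ => x i) t i' g')
          = ∑ g' : G, if g' = g then w t i i' * dnnUnits m w b x t i' else 0 :=
            Finset.sum_congr rfl fun g' _ => hkey g'
        _ = w t i i' * dnnUnits m w b x t i' := by simp

/-- **Lemma 5.2.** For `L > 3` and any finite group `G` (of cardinality `r ≥ 1`),
`VC(H_{6W, L+1, r}) ≥ VC(F_{W,L})`: every set of points shattered by `sign(F_{W,L})`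
has a counterpart of the same size shattered by `sign(H_{6W,L+1,r})`. -/
theorem gcnn_vc_ge_dnn_vc
    (G : Type) [Group G] [Fintype G] (W L : ℕ) (hW : 1 ≤ W) (hL : 3 < L)
    (d : ℕ) (hd : ShattersCard (signClass (DNNBig W L)) d) :
    ShattersCard (signClass (GCNNBig G (6 * W) (L + 1))) d := by
  obtain ⟨x, hx_inj, hx⟩ := hd
  refine ⟨fun i => fun _ n => x i n, ?_, ?_⟩
  · intro i j hij
    exact hx_inj (funext fun n => congrFun (congrFun hij 1) n)
  · intro ε
    obtain ⟨s, ⟨h, ⟨ℓ, m, w, b, hℓ, hP, hm1, hh⟩, c, hs⟩, hε⟩ := hx ε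
    set r : ℝ := (Fintype.card G : ℝ) with hr
    have hrpos : 0 < r := by
      simp only [hr]
      exact_mod_cast Fintype.card_pos
    set K : Fin 1 → G → ℝ := fun _ g => if g = (1:G) then (1 : ℝ) else 0 with hK
    set w' : ∀ t : ℕ, Fin (m (t + 1)) → Fin (m t) → Fin 1 → ℝ :=
      fun t j i _ => w t j i with hw'
    refine ⟨fun F => sgn ((fun f => gcnnOut G m K w' b ℓ
        (fun i g => f g (i : ℕ))) F - r * c), ⟨_, ?_, r * c, rfl⟩, ?_⟩
    · exact ⟨1, ℓ, m, K, w', b, one_pos, le_trans hℓ (Nat.le_succ L), by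
        have : gcnnParams 1 m ℓ = dnnParams m ℓ := by
          unfold gcnnParams dnnParams; simp
        rw [this]
        exact le_trans hP (Nat.le_mul_of_pos_left W (by norm_num)), rfl⟩
    · intro i
      have hout : gcnnOut G m K w' b ℓ (fun j g => x i (j : ℕ)) =
          r * ∑ j : Fin (m ℓ), dnnUnits m w b (fun j' => x i (j' : ℕ)) ℓ j := by
        unfold gcnnOut
        rw [Finset.mul_sum]
        refine Finset.sum_congr rfl fun j _ => ?_
        have : ∀ g : G, gcnnUnits G m K w' b (fun j g => x i (j : ℕ)) ℓ j g =
            dnnUnits m w b (fun j' => x i (j' : ℕ)) ℓ j := fun g =>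
          gcnn_units_const G m w b (fun j' => x i (j' : ℕ)) ℓ j g
        simp [this, hr, mul_comm]
      have hval : gcnnOut G m K w' b ℓ (fun j g => x i (j : ℕ)) - r * c
          = r * (h (x i) - c) := by
        rw [hout, hh, mul_sub]
      simp only
      rw [hval]
      have hsgn : sgn (r * (h (x i) - c)) = sgn (h (x i) - c) := by
        unfold sgn
        simp [mul_pos_iff_of_pos_left, hrpos]
      rw [hsgn, ← hε i, hs]
end
end

section
/- Let m̃, w, κ be nonnegative integers and r̃ a real number with r̃ ≥ 16 and m̃ ≥ w ≥ κ ≥ 0. If 2^{m̃} ≤ 2^{κ}·(m̃·r̃/w)^{w}, then m̃ ≤ κ + w·log₂(2·r̃·log₂ r̃). -/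
open Real

/-- On `[2,∞)`, `logb 2` grows slower than the identity (strict form). -/
lemma logb_sub_lt_sub {x y : ℝ} (hy : 2 ≤ y) (hxy : y < x) :
    Real.logb 2 x - Real.logb 2 y < x - y := by
  have hy0 : 0 < y := by linarith
  have hx0 : 0 < x := by linarith
  have hdiv : 0 < x / y := div_pos hx0 hy0
  have hne : x / y ≠ 1 := by
    intro hxy1
    rw [div_eq_one_iff_eq hy0.ne'] at hxy1
    linarith
  have hlog : Real.log (x / y) < x / y - 1 := Real.log_lt_sub_one_of_pos hdiv hne
  have hlog2 : (0.6931471803 : ℝ) < Real.log 2 := Real.log_two_gt_d9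
  have hlog2pos : (0 : ℝ) < Real.log 2 := by linarith
  have heq : Real.logb 2 x - Real.logb 2 y = Real.log (x / y) / Real.log 2 := by
    rw [Real.logb, Real.logb, Real.log_div hx0.ne' hy0.ne', sub_div]
  rw [heq]
  have h1 : Real.log (x / y) / Real.log 2 < (x / y - 1) / Real.log 2 := by
    gcongr
  have h2 : (x / y - 1) / Real.log 2 ≤ x - y := by
    have hxy' : x / y - 1 = (x - y) / y := by field_simp
    rw [hxy', div_div]
    exact div_le_self (by linarith) (by nlinarith)
  linarith

/-- Core real inequality: if `t ≤ 1 + log₂ t + L` with `t ≥ 1`, `L ≥ 4`,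
then `t ≤ 2 L`. -/
lemma core_ineq {t L : ℝ} (_ht : 1 ≤ t) (hL : 4 ≤ L)
    (h : t ≤ 1 + Real.logb 2 t + L) : t ≤ 2 * L := by
  by_contra hc
  push_neg at hc
  have h1 : Real.logb 2 t - Real.logb 2 (2 * L) < t - 2 * L :=
    logb_sub_lt_sub (by linarith) hc
  have h2 : Real.logb 2 L - Real.logb 2 4 ≤ L - 4 := by
    rcases eq_or_lt_of_le hL with hEq | hlt
    · simp [← hEq]
    · linarith [logb_sub_lt_sub (le_refl (2:ℝ) |>.trans (by norm_num)) hlt]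
  have h4 : Real.logb 2 4 = 2 := by
    rw [show (4 : ℝ) = 2 ^ (2 : ℕ) by norm_num, Real.logb_pow,
      Real.logb_self_eq_one (by norm_num)]
    norm_num
  have h5 : Real.logb 2 (2 * L) = 1 + Real.logb 2 L := by
    rw [Real.logb_mul (by norm_num) (by positivity),
      Real.logb_self_eq_one (by norm_num)]
  rw [h5] at h1
  rw [h4] at h2
  linarith

/-- **Lemma 16 of Bartlett et al.** If `r̃ ≥ 16`, `m̃ ≥ w ≥ κ ≥ 0` and
`2^m̃ ≤ 2^κ (m̃ r̃ / w)^w`, then `m̃ ≤ κ + w log₂(2 r̃ log₂ r̃)`. -/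
theorem bartlett_lemma16 (mt w κ : ℕ) (rt : ℝ) (hr : 16 ≤ rt)
    (hκw : κ ≤ w) (hwm : w ≤ mt)
    (h : (2 : ℝ) ^ mt ≤ 2 ^ κ * (((mt : ℝ) * rt) / (w : ℝ)) ^ w) :
    (mt : ℝ) ≤ (κ : ℝ) + (w : ℝ) * Real.logb 2 (2 * rt * Real.logb 2 rt) := by
  have hrt0 : (0 : ℝ) < rt := by linarith
  rcases Nat.eq_zero_or_pos w with hw0 | hwpos
  · subst hw0
    have hκ0 : κ = 0 := Nat.le_zero.mp hκw
    subst hκ0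
    simp only [pow_zero, mul_one] at h
    have : mt = 0 := by
      by_contra hmt
      have : (2 : ℝ) ^ mt > 1 := one_lt_pow₀ (by norm_num) hmt
      linarith
    simp [this]
  -- positive case
  have hW0 : (0 : ℝ) < (w : ℝ) := by exact_mod_cast hwpos
  have hM0 : (0 : ℝ) < (mt : ℝ) := by
    exact_mod_cast Nat.lt_of_lt_of_le hwpos hwm
  have hWM : (w : ℝ) ≤ (mt : ℝ) := by exact_mod_cast hwm
  have hκW : (κ : ℝ) ≤ (w : ℝ) := by exact_mod_cast hκw
  set L := Real.logb 2 rt with hLdef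
  have hL4 : 4 ≤ L := by
    have : Real.logb 2 (16 : ℝ) = 4 := by
      rw [show (16 : ℝ) = 2 ^ (4 : ℕ) by norm_num, Real.logb_pow,
        Real.logb_self_eq_one (by norm_num)]
      norm_num
    calc (4 : ℝ) = Real.logb 2 16 := this.symm
      _ ≤ L := Real.logb_le_logb_of_le (by norm_num) (by norm_num) hr
  set t := (mt : ℝ) / (w : ℝ) with htdef
  have ht1 : 1 ≤ t := (one_le_div hW0).mpr hWM
  have ht0 : 0 < t := by linarith
  have hbase : (0 : ℝ) < (mt : ℝ) * rt / (w : ℝ) := by positivity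
  have hbase_eq : (mt : ℝ) * rt / (w : ℝ) = t * rt := by
    rw [htdef]; ring
  -- take logs of h
  have hlog : (mt : ℝ) ≤ (κ : ℝ) + (w : ℝ) * Real.logb 2 (t * rt) := by
    have h1 : Real.logb 2 ((2 : ℝ) ^ mt) ≤
        Real.logb 2 ((2 : ℝ) ^ κ * (((mt : ℝ) * rt) / (w : ℝ)) ^ w) :=
      Real.logb_le_logb_of_le (by norm_num) (by positivity) h
    rw [Real.logb_mul (by positivity) (by positivity), Real.logb_pow,
      Real.logb_pow, Real.logb_pow, Real.logb_self_eq_one (by norm_num),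
      hbase_eq] at h1
    simpa using h1
  have hsplit : Real.logb 2 (t * rt) = Real.logb 2 t + L := by
    rw [Real.logb_mul ht0.ne' hrt0.ne']
  rw [hsplit] at hlog
  have htw : (mt : ℝ) = t * (w : ℝ) := by
    rw [htdef]; field_simp
  -- derive scalar inequality
  have hkey : t ≤ 1 + Real.logb 2 t + L := by
    have : t * (w : ℝ) ≤ (w : ℝ) * (1 + Real.logb 2 t + L) := by
      rw [← htw]; nlinarith
    nlinarith
  have ht2L : t ≤ 2 * L := core_ineq ht1 hL4 hkey
  -- conclude
  have hfin : Real.logb 2 t + L ≤ Real.logb 2 (2 * rt * L) := by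
    have h1 : t * rt ≤ 2 * rt * L := by nlinarith
    calc Real.logb 2 t + L = Real.logb 2 (t * rt) := hsplit.symm
      _ ≤ Real.logb 2 (2 * rt * L) :=
        Real.logb_le_logb_of_le (by norm_num) (by positivity) h1
  nlinarith
end
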